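/- There is a natural algebra isomorphism between the initial commutative n-algebra C_n and the symmetric algebra S(T_n) on the vector space spanned by rooted trees with n-coloured edges; equivalently, S(T_n), equipped with the grafting operation λ : S(T_n)^{⊗n} → S(T_n) sending n forests (f_1,…,f_n) to the single tree obtained by adding a new root and connecting the new root to each root in f_i by an edge of colour i, is an initial object in the category of commutative n-algebras. -/

import Mathlib

namespace CTrees

/-- Planar representative of a rooted tree with edges coloured by `Fin n`:
a node carries the list of (edge colour, subtree) pairs of its children. -/
inductive PTree (n : ℕ) : Type where
  | node : List (Fin n × PTree n) → PTree n

/-- Two planar representatives represent the same (non-planar) `n`-coloured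
rooted tree: children may be permuted; colours and (recursively) subtrees must
match. -/
inductive PEquiv {n : ℕ} : PTree n → PTree n → Prop where
  | node {l₁ l₂ : List (Fin n × PTree n)} (l : List (Fin n × PTree n))
      (hp : l₁.Perm l)
      (hc : l.map Prod.fst = l₂.map Prod.fst)
      (hf : List.Forall₂ PEquiv (l.map Prod.snd) (l₂.map Prod.snd)) :
      PEquiv (.node l₁) (.node l₂)

/-- Rooted trees with `n`-coloured edges (isomorphism classes). -/
def Tree (n : ℕ) : Type := Quot (@PEquiv n)

/-- A forest: a finite multiset of rooted `n`-coloured trees, encoded as a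
finitely supported multiplicity function on trees.  Addition of forests is
disjoint union, `0` is the empty forest. -/
abbrev Forest (n : ℕ) : Type := Tree n →₀ ℕ

variable {n : ℕ}

mutual
/-- Number of vertices of a planar representative. -/
def psize : PTree n → ℕ
  | .node l => 1 + psizeL l
def psizeL : List (Fin n × PTree n) → ℕ
  | [] => 0
  | a :: l => psize a.2 + psizeL l
end

/-- Number of vertices of an `n`-coloured tree. -/
noncomputable def tsize (t : Tree n) : ℕ := psize (Quot.out t)

/-- Number of vertices of a forest. -/
noncomputable def fsize (f : Forest n) : ℕ := Finsupp.sum f fun t m => m * tsize t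

/-- The trees of a forest, as a list of planar representatives. -/
noncomputable def Forest.toList (f : Forest n) : List (PTree n) :=
  f.support.toList.flatMap fun t => List.replicate (f t) (Quot.out t)

/-- Grafting: attach the trees of the forests `g 0, …, g (n-1)` to a new root,
those of `g i` by edges of colour `i`. -/
noncomputable def graft (g : Fin n → Forest n) : Tree n :=
  Quot.mk _ (PTree.node
    ((List.finRange n).flatMap fun i => (Forest.toList (g i)).map fun p => (i, p)))

mutual
/-- Addresses (paths from the root) of the vertices of a planar tree. -/
def verts : PTree n → List (List ℕ)
  | .node l => [] :: vertsL 0 l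
def vertsL : ℕ → List (Fin n × PTree n) → List (List ℕ)
  | _, [] => []
  | j, a :: l => (verts a.2).map (j :: ·) ++ vertsL (j + 1) l
end

/-- The subtree of `t` rooted at the vertex with address `a`. -/
def subAt : List ℕ → PTree n → Option (PTree n)
  | [], t => some t
  | j :: a, .node l => match l[j]? with
    | some ct => subAt a ct.2
    | none => none

/-- Colour of the edge from the vertex at address `a` to its `j`-th child. -/
def ecolour (t : PTree n) (a : List ℕ) (j : ℕ) : Option (Fin n) :=
  match subAt a t with
  | some (.node l) => (l[j]?).map Prod.fst
  | none => none

/-- Vertices of a forest of planar trees: pairs (component index, address). -/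
def vertsF (L : List (PTree n)) : Finset (ℕ × List ℕ) :=
  ((L.zipIdx.map Prod.swap).flatMap fun p => (verts p.2).map fun a => (p.1, a)).toFinset

/-- Colour of the edge of the forest `L` leaving the vertex `a` upward towards
the vertex `v` (a strict descendant of `a` in the same component). -/
def edgeTowards (L : List (PTree n)) (a v : ℕ × List ℕ) : Option (Fin n) :=
  match L[a.1]? with
  | some t => ecolour t a.2 (v.2.getD a.2.length 0)
  | none => none

/-- `pIn L W s c v` : in the subforest of `L` induced on the vertex set `W`,
the number of edges of colour `c` on the path from `v` to the root of its
component whose lower vertex does not belong to `s`.  (The edge of the induced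
forest leaving an ancestor `a ∈ W` of `v` upward inherits the colour of the
edge of `L` leaving `a` towards `v`.) -/
def pIn (L : List (PTree n)) (W s : Finset (ℕ × List ℕ)) (c : Fin n) (v : ℕ × List ℕ) : ℕ :=
  (W.filter fun a => a.1 = v.1 ∧ a.2 ≠ v.2 ∧ a.2 <+: v.2 ∧ a ∉ s ∧
     edgeTowards L a v = some c).card

/-- The coefficient `q(s,w)`, for the subforest induced on `s ⊆ W` of the
subforest `w` of `L` induced on `W`:
`q(s,w) = ∏_j ∏_{v ∈ s} q₁ⱼ^{pⱼ(v,s,w)} ∏_{v ∈ w∖s} q₂ⱼ^{pⱼ(v,s^c,w)}`. -/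
def qIn {k : Type} [CommRing k] (q1 q2 : Fin n → k) (L : List (PTree n))
    (W s : Finset (ℕ × List ℕ)) : k :=
  ∏ c : Fin n,
    ((∏ v ∈ s, q1 c ^ pIn L W s c v) * ∏ v ∈ W \ s, q2 c ^ pIn L W (W \ s) c v)

/-- Restrict the address set `s` along the `j`-th child. -/
def shift (j : ℕ) (s : Finset (List ℕ)) : Finset (List ℕ) :=
  (s.filter fun x => x.head? = some j).image List.tail

mutual
/-- The forest induced on the set `s` of vertex addresses of the planar tree
`t`: the trees rooted at the minimal elements of `s`, a cover relation
`v ⋖ w` of the induced order receiving the colour of the edge of `t` leaving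
`v` towards `w`. -/
def restr : PTree n → Finset (List ℕ) → List (PTree n)
  | .node l, s =>
      let ch := restrL 0 l s
      if ([] : List ℕ) ∈ s then [.node ch] else ch.map Prod.snd
def restrL : ℕ → List (Fin n × PTree n) → Finset (List ℕ) → List (Fin n × PTree n)
  | _, [], _ => []
  | j, a :: l, s =>
      ((restr a.2 (shift j s)).map fun u => (a.1, u)) ++ restrL (j + 1) l s
end

/-- The forest induced on a set `S` of vertices of the forest `L`. -/
def restrF (L : List (PTree n)) (S : Finset (ℕ × List ℕ)) : List (PTree n) :=
  (L.zipIdx.map Prod.swap).flatMap fun p => restr p.2 ((S.filter fun v => v.1 = p.1).image Prod.snd)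

/-- A list of planar trees, as a forest. -/
noncomputable def listForest (l : List (PTree n)) : Forest n :=
  (l.map fun p => Finsupp.single (Quot.mk _ p : Tree n) 1).sum

/-- The forest of `L`, i.e. the multiset of its components. -/
noncomputable def ofList (L : List (PTree n)) : Forest n := listForest L

/-- The subforest of the forest `L` induced on the vertex set `S`. -/
noncomputable def subforestOf (L : List (PTree n)) (S : Finset (ℕ × List ℕ)) : Forest n :=
  listForest (restrF L S)

/-! ### The symmetric algebra on `n`-coloured rooted trees -/

variable (k : Type) [CommRing k]

/-- `S(T_n)`: the symmetric algebra on the vector space spanned by rooted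
trees with `n`-coloured edges, realised as the polynomial algebra on the set
of such trees; its canonical basis is given by (monomials corresponding to)
forests. -/
abbrev SymT (n : ℕ) : Type := MvPolynomial (Tree n) k

/-- The basis vector of `S(T_n)` corresponding to a forest. -/
noncomputable def fmon (f : Forest n) : SymT k n := MvPolynomial.monomial f 1

/-- The augmentation `ε : S(T_n) → k`. -/
noncomputable def aug (n : ℕ) : SymT k n →ₐ[k] k := MvPolynomial.aeval fun _ => (0 : k)



open scoped TensorProduct
open PiTensorProduct


/-! ### Auxiliary lemmas -/

section Aux

variable {n : ℕ}

theorem psize_node (l : List (Fin n × PTree n)) : psize (PTree.node l) = 1 + psizeL l := by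
  rw [psize]

theorem psizeL_cons (a : Fin n × PTree n) (l : List (Fin n × PTree n)) :
    psizeL (a :: l) = psize a.2 + psizeL l := by rw [psizeL]

theorem psizeL_eq (l : List (Fin n × PTree n)) :
    psizeL l = ((l.map Prod.snd).map psize).sum := by
  induction l with
  | nil => rw [psizeL]; rfl
  | cons a l ih => rw [psizeL_cons, ih]; simp

theorem psizeL_perm {l₁ l₂ : List (Fin n × PTree n)} (h : l₁.Perm l₂) :
    psizeL l₁ = psizeL l₂ := by
  rw [psizeL_eq, psizeL_eq]
  exact ((h.map Prod.snd).map psize).sum_eq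

theorem psize_le_of_mem {a : Fin n × PTree n} {l : List (Fin n × PTree n)} (h : a ∈ l) :
    psize a.2 ≤ psizeL l := by
  induction l with
  | nil => cases h
  | cons b l ih =>
    rw [psizeL_cons]
    rcases List.mem_cons.mp h with h | h
    · subst h; exact Nat.le_add_right _ _
    · exact le_trans (ih h) (Nat.le_add_left _ _)

theorem forall₂_and_left {α β : Type*} {R : α → β → Prop} {P : α → Prop} :
    ∀ {l₁ : List α} {l₂ : List β}, List.Forall₂ R l₁ l₂ → (∀ a ∈ l₁, P a) →
      List.Forall₂ (fun a b => R a b ∧ P a) l₁ l₂ := by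
  intro l₁ l₂ h hp
  induction h with
  | nil => exact .nil
  | @cons a b l₁ l₂ h₁ h₂ ih =>
    exact .cons ⟨h₁, hp _ List.mem_cons_self⟩ (ih fun x hx => hp _ (List.mem_cons_of_mem _ hx))

theorem map_psize_of_forall₂ : ∀ {xs ys : List (PTree n)},
    List.Forall₂ (fun a b => psize a = psize b) xs ys → xs.map psize = ys.map psize := by
  intro xs ys h
  induction h with
  | nil => rfl
  | cons h₁ _ ih => simp only [List.map_cons, h₁, ih]

theorem psize_eq_of_pequiv : ∀ {p q : PTree n}, PEquiv p q → psize p = psize q := by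
  suffices H : ∀ (N : ℕ) {p q : PTree n}, psize p ≤ N → PEquiv p q → psize p = psize q by
    exact fun {p q} h => H (psize p) le_rfl h
  intro N
  induction N with
  | zero =>
    intro p q hle _
    cases p with | node l => rw [psize_node] at hle; omega
  | succ N ih =>
    rintro p q hle ⟨m, hp, hc, hf⟩
    rename_i l₁ l₂
    rw [psize_node] at hle ⊢
    rw [psize_node, psizeL_perm hp]
    have hb : ∀ a ∈ m.map Prod.snd, psize a ≤ N := by
      intro a ha
      obtain ⟨b, hb, rfl⟩ := List.mem_map.mp ha
      have := psize_le_of_mem hb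
      rw [← psizeL_perm hp] at this
      omega
    have hf' := (forall₂_and_left hf hb).imp (fun {a b} h => ih h.2 h.1)
    have hmap := map_psize_of_forall₂ hf'
    rw [psizeL_eq, psizeL_eq, hmap]

theorem pequiv_refl (p : PTree n) : PEquiv p p := by
  suffices H : ∀ (N : ℕ) (p : PTree n), psize p ≤ N → PEquiv p p from H (psize p) p le_rfl
  intro N
  induction N with
  | zero => intro p h; cases p with | node l => rw [psize_node] at h; omega
  | succ N ih =>
    intro p h
    cases p with
    | node l =>
      refine PEquiv.node l (List.Perm.refl l) rfl (List.forall₂_same.mpr fun a ha => ?_)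
      obtain ⟨b, hb, rfl⟩ := List.mem_map.mp ha
      rw [psize_node] at h
      exact ih _ (le_trans (psize_le_of_mem hb) (by omega))

theorem mk_node_perm {l₁ l₂ : List (Fin n × PTree n)} (h : l₁.Perm l₂) :
    Quot.mk PEquiv (PTree.node l₁) = Quot.mk PEquiv (PTree.node l₂) :=
  Quot.sound (PEquiv.node l₂ h rfl (List.forall₂_same.mpr fun a _ => pequiv_refl a))

theorem mk_node_replace (l₁ l₂ : List (Fin n × PTree n)) (c : Fin n) {x y : PTree n}
    (h : Quot.mk PEquiv x = Quot.mk PEquiv y) :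
    Quot.mk PEquiv (PTree.node (l₁ ++ (c, x) :: l₂))
      = Quot.mk PEquiv (PTree.node (l₁ ++ (c, y) :: l₂)) := by
  have key : ∀ {u v : PTree n}, PEquiv u v →
      Quot.mk PEquiv (PTree.node (l₁ ++ (c, u) :: l₂))
        = Quot.mk PEquiv (PTree.node (l₁ ++ (c, v) :: l₂)) := by
    intro u v huv
    refine Quot.sound (PEquiv.node (l₁ ++ (c, u) :: l₂) (List.Perm.refl _) ?_ ?_)
    · simp
    · simp only [List.map_append, List.map_cons]
      exact List.rel_append (List.forall₂_same.mpr fun a _ => pequiv_refl a)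
        (List.Forall₂.cons huv (List.forall₂_same.mpr fun a _ => pequiv_refl a))
  exact congrArg (Quot.lift
    (fun z => Quot.mk PEquiv (PTree.node (l₁ ++ (c, z) :: l₂)))
    (fun u v huv => key huv)) h

theorem mk_node_congr_aux : ∀ (l l' pre : List (Fin n × PTree n)),
    l.map Prod.fst = l'.map Prod.fst →
    List.Forall₂ (fun a b : Fin n × PTree n => Quot.mk PEquiv a.2 = Quot.mk PEquiv b.2) l l' →
    Quot.mk PEquiv (PTree.node (pre ++ l)) = Quot.mk PEquiv (PTree.node (pre ++ l')) := by
  intro l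
  induction l with
  | nil => intro l' pre hc hf; cases hf; rfl
  | cons a l ih =>
    intro l' pre hc hf
    cases hf with
    | cons hab hf' =>
      rename_i b l'
      simp only [List.map_cons, List.cons.injEq] at hc
      obtain ⟨c, x⟩ := a
      obtain ⟨c', y⟩ := b
      obtain ⟨rfl, hc2⟩ : c = c' ∧ l.map Prod.fst = l'.map Prod.fst := hc
      calc Quot.mk PEquiv (PTree.node (pre ++ (c, x) :: l))
          = Quot.mk PEquiv (PTree.node (pre ++ (c, y) :: l)) := mk_node_replace _ _ _ hab
        _ = Quot.mk PEquiv (PTree.node ((pre ++ [(c, y)]) ++ l)) := by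
            rw [List.append_assoc, List.singleton_append]
        _ = Quot.mk PEquiv (PTree.node ((pre ++ [(c, y)]) ++ l')) := ih l' _ hc2 hf'
        _ = Quot.mk PEquiv (PTree.node (pre ++ (c, y) :: l')) := by
            rw [List.append_assoc, List.singleton_append]

theorem mk_node_congr {l l' : List (Fin n × PTree n)}
    (hc : l.map Prod.fst = l'.map Prod.fst)
    (hf : List.Forall₂ (fun a b : Fin n × PTree n => Quot.mk PEquiv a.2 = Quot.mk PEquiv b.2) l l') :
    Quot.mk PEquiv (PTree.node l) = Quot.mk PEquiv (PTree.node l') := by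
  simpa using mk_node_congr_aux l l' [] hc hf

end Aux

section PVal

variable {n : ℕ} {k : Type} [CommRing k] {A : Type} [CommRing A] [Algebra k A]

noncomputable def pval (α : (⨂[k]^n A) →ₗ[k] A) : PTree n → A
  | .node l => α (tprod k fun i =>
      (l.attach.map fun a => if a.1.1 = i then pval α a.1.2 else 1).prod)
  decreasing_by
    obtain ⟨⟨c, t⟩, ha⟩ := a
    have := List.sizeOf_lt_of_mem ha
    simp at this ⊢
    omega

theorem pval_node (α : (⨂[k]^n A) →ₗ[k] A) (l : List (Fin n × PTree n)) :
    pval α (PTree.node l)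
      = α (tprod k fun i => (l.map fun a => if a.1 = i then pval α a.2 else 1).prod) := by
  rw [pval.eq_1]
  congr 1
  congr 1
  funext i
  congr 1
  exact List.attach_map_val (l := l) (f := fun x => if x.1 = i then pval α x.2 else 1)

theorem map_ite_eq_of (α : (⨂[k]^n A) →ₗ[k] A) (i : Fin n) :
    ∀ {m l₂ : List (Fin n × PTree n)},
    m.map Prod.fst = l₂.map Prod.fst →
    List.Forall₂ (fun a b : Fin n × PTree n => pval α a.2 = pval α b.2) m l₂ →
    m.map (fun a => if a.1 = i then pval α a.2 else 1)
      = l₂.map (fun a => if a.1 = i then pval α a.2 else 1) := by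
  intro m l₂ hc hf
  induction hf with
  | nil => rfl
  | @cons a b m l₂ hab hf ih =>
    simp only [List.map_cons, List.cons.injEq] at hc ⊢
    refine ⟨?_, ih hc.2⟩
    rw [hc.1, hab]

theorem pval_respects (α : (⨂[k]^n A) →ₗ[k] A) :
    ∀ {p q : PTree n}, PEquiv p q → pval α p = pval α q := by
  suffices H : ∀ (N : ℕ) {p q : PTree n}, psize p ≤ N → PEquiv p q → pval α p = pval α q by
    exact fun {p q} h => H (psize p) le_rfl h
  intro N
  induction N with
  | zero =>
    intro p q hle _
    cases p with | node l => rw [psize_node] at hle; omega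
  | succ N ih =>
    rintro p q hle ⟨m, hp, hc, hf⟩
    rename_i l₁ l₂
    rw [pval_node, pval_node]
    congr 1
    congr 1
    funext i
    have h1 : (l₁.map fun a => if a.1 = i then pval α a.2 else 1).prod
        = (m.map fun a => if a.1 = i then pval α a.2 else 1).prod :=
      (hp.map _).prod_eq
    rw [h1]
    congr 1
    have hb : ∀ a ∈ m, psize a.2 ≤ N := by
      intro a ha
      have h2 := psize_le_of_mem ha
      rw [← psizeL_perm hp] at h2
      rw [psize_node] at hle
      omega
    have hf2 : List.Forall₂ (fun a b : Fin n × PTree n => PEquiv a.2 b.2) m l₂ :=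
      List.forall₂_map_left_iff.mp (List.forall₂_map_right_iff.mp hf)
    have hf3 := (forall₂_and_left hf2 hb).imp (fun {a b} h => ih h.2 h.1)
    exact map_ite_eq_of α i hc hf3

noncomputable def treeval (α : (⨂[k]^n A) →ₗ[k] A) : Tree n → A :=
  Quot.lift (pval α) (fun _ _ h => pval_respects α h)

theorem treeval_mk (α : (⨂[k]^n A) →ₗ[k] A) (p : PTree n) :
    treeval α (Quot.mk PEquiv p) = pval α p := rfl

end PVal

section TSize

variable {n : ℕ}

noncomputable def size' : Tree n → ℕ :=
  Quot.lift psize (fun _ _ h => psize_eq_of_pequiv h)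

theorem tsize_mk (p : PTree n) : tsize (Quot.mk PEquiv p : Tree n) = psize p := by
  have h1 : tsize (Quot.mk PEquiv p : Tree n)
      = size' (Quot.mk PEquiv (Quot.out (Quot.mk PEquiv p)) : Tree n) := rfl
  rw [h1, Quot.out_eq]
  rfl

end TSize

section Lam

variable {n : ℕ} {k : Type} [CommRing k]

noncomputable def decode (d : (Fin n × Tree n) →₀ ℕ) : Fin n → Forest n := fun i => d.curry i

noncomputable def graftLin : MvPolynomial (Fin n × Tree n) k →ₗ[k] SymT k n :=
  (MvPolynomial.basisMonomials (Fin n × Tree n) k).constr k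
    fun d => fmon k (Finsupp.single (graft (decode d)) 1)

noncomputable def graftML : MultilinearMap k (fun _ : Fin n => SymT k n) (SymT k n) :=
  (graftLin).compMultilinearMap
    ((MultilinearMap.mkPiAlgebra k (Fin n) (MvPolynomial (Fin n × Tree n) k)).compLinearMap
      fun i => (MvPolynomial.rename fun t : Tree n => (i, t)).toLinearMap)

noncomputable def lam : (⨂[k]^n (SymT k n)) →ₗ[k] SymT k n := PiTensorProduct.lift graftML

theorem prod_monomial {σ : Type*} (s : Finset (Fin n)) (d : Fin n → (σ →₀ ℕ)) :
    (∏ i ∈ s, MvPolynomial.monomial (d i) (1 : k)) = MvPolynomial.monomial (∑ i ∈ s, d i) 1 := by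
  classical
  induction s using Finset.induction_on with
  | empty => simp
  | insert _ _ h ih =>
    rw [Finset.prod_insert h, ih, MvPolynomial.monomial_mul, Finset.sum_insert h, one_mul]

theorem decode_encode (g : Fin n → Forest n) :
    decode (∑ i, Finsupp.mapDomain (fun t : Tree n => (i, t)) (g i)) = g := by
  funext i
  ext t
  show ((∑ j, Finsupp.mapDomain (fun t : Tree n => (j, t)) (g j)).curry i) t = g i t
  rw [Finsupp.curry_apply, Finsupp.finset_sum_apply]
  rw [Finset.sum_eq_single i]
  · exact Finsupp.mapDomain_apply (fun a b h => ((Prod.mk.injEq _ _ _ _).mp h).2) _ _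
  · intro j _ hji
    refine Finsupp.mapDomain_notin_range _ _ ?_
    rintro ⟨s, hs⟩
    exact hji ((Prod.mk.injEq _ _ _ _).mp hs).1
  · intro h
    exact absurd (Finset.mem_univ i) h

theorem lam_tprod (g : Fin n → Forest n) :
    lam (tprod k fun i => fmon k (g i)) = fmon k (Finsupp.single (graft g) 1) := by
  rw [lam, PiTensorProduct.lift.tprod]
  show graftLin ((MultilinearMap.mkPiAlgebra k (Fin n) (MvPolynomial (Fin n × Tree n) k))
      fun i => (MvPolynomial.rename fun t : Tree n => (i, t)) (fmon k (g i))) = _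
  rw [MultilinearMap.mkPiAlgebra_apply]
  have h1 : ∀ i : Fin n, (MvPolynomial.rename fun t : Tree n => (i, t)) (fmon k (g i))
      = MvPolynomial.monomial (Finsupp.mapDomain (fun t : Tree n => (i, t)) (g i)) (1 : k) :=
    fun i => MvPolynomial.rename_monomial _ _ _
  simp only [h1]
  rw [prod_monomial]
  have h2 : (MvPolynomial.monomial (∑ i, Finsupp.mapDomain (fun t : Tree n => (i, t)) (g i)) (1 : k))
      = (MvPolynomial.basisMonomials (Fin n × Tree n) k)
          (∑ i, Finsupp.mapDomain (fun t : Tree n => (i, t)) (g i)) := by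
    rw [MvPolynomial.coe_basisMonomials]
  rw [h2, graftLin, Module.Basis.constr_basis, decode_encode]

theorem tensor_ext {A : Type} [AddCommMonoid A] [Module k A]
    {φ₁ φ₂ : (⨂[k]^n (SymT k n)) →ₗ[k] A}
    (h : ∀ g : Fin n → Forest n,
      φ₁ (tprod k fun i => fmon k (g i)) = φ₂ (tprod k fun i => fmon k (g i))) : φ₁ = φ₂ := by
  apply PiTensorProduct.ext
  apply Module.Basis.ext_multilinear (fun _ => MvPolynomial.basisMonomials (Tree n) k)
  intro v
  have hv := h v
  simpa [MvPolynomial.coe_basisMonomials, fmon] using hv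

end Lam

section FHom

variable {n : ℕ} {k : Type} [CommRing k] {A : Type} [CommRing A] [Algebra k A]

noncomputable def fhom (α : (⨂[k]^n A) →ₗ[k] A) : SymT k n →ₐ[k] A :=
  MvPolynomial.aeval (treeval α)

theorem fhom_X (α : (⨂[k]^n A) →ₗ[k] A) (t : Tree n) :
    fhom α (MvPolynomial.X t) = treeval α t := MvPolynomial.aeval_X _ _

theorem fmon_single (t : Tree n) : fmon k (Finsupp.single t 1) = MvPolynomial.X t := rfl

theorem fhom_fmon (α : (⨂[k]^n A) →ₗ[k] A) (f : Forest n) :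
    fhom α (fmon k f) = f.prod fun t m => treeval α t ^ m := by
  rw [fmon, fhom, MvPolynomial.aeval_monomial, _root_.map_one, one_mul]

theorem prod_map_flatMap {β γ M : Type*} [CommMonoid M] (L : List β) (h : β → List γ)
    (F : γ → M) :
    ((L.flatMap h).map F).prod = (L.map fun b => ((h b).map F).prod).prod := by
  induction L with
  | nil => rfl
  | cons b L ih => simp [List.flatMap_cons, ih]

theorem prod_toList_pval (α : (⨂[k]^n A) →ₗ[k] A) (f : Forest n) :
    ((Forest.toList f).map (pval α)).prod = f.prod fun t m => treeval α t ^ m := by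
  rw [Forest.toList, prod_map_flatMap]
  have h2 : ∀ t : Tree n, pval α (Quot.out t) = treeval α t := fun t => by
    rw [← treeval_mk α (Quot.out t)]; exact congrArg (treeval α) (Quot.out_eq t)
  have h3 : (f.support.toList.map fun t => ((List.replicate (f t) (Quot.out t)).map
      (pval α)).prod) = f.support.toList.map fun t => treeval α t ^ f t := by
    refine List.map_congr_left fun t _ => ?_
    rw [List.map_replicate, List.prod_replicate, h2]
  rw [h3, Finsupp.prod, Finset.prod_map_toList]

theorem treeval_graft (α : (⨂[k]^n A) →ₗ[k] A) (g : Fin n → Forest n) :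
    treeval α (graft g) = α (tprod k fun i => (g i).prod fun t m => treeval α t ^ m) := by
  rw [graft, treeval_mk, pval_node]
  congr 1
  congr 1
  funext i
  rw [prod_map_flatMap]
  have hG : ∀ j : Fin n, (((Forest.toList (g j)).map fun p => ((j : Fin n), p)).map
        fun a => if a.1 = i then pval α a.2 else 1).prod
      = if j = i then (g i).prod (fun t m => treeval α t ^ m) else 1 := by
    intro j
    rw [List.map_map]
    by_cases hji : j = i
    · subst hji
      have he : ((fun a : Fin n × PTree n => if a.1 = j then pval α a.2 else 1)
          ∘ fun p => (j, p)) = pval α := by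
        funext p; simp
      rw [he, prod_toList_pval, if_pos rfl]
    · have he : ((fun a : Fin n × PTree n => if a.1 = i then pval α a.2 else 1)
          ∘ fun p => (j, p)) = fun _ => 1 := by
        funext p; simp [hji]
      rw [he, if_neg hji]
      simp
  have h4 : ((List.finRange n).map fun j => (((Forest.toList (g j)).map fun p => (j, p)).map
        fun a => if a.1 = i then pval α a.2 else 1).prod)
      = (List.finRange n).map fun j => if j = i then (g i).prod (fun t m => treeval α t ^ m)
          else 1 :=
    List.map_congr_left fun j _ => hG j
  rw [h4, ← Fin.prod_univ_def]
  simp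

theorem fhom_graft (α : (⨂[k]^n A) →ₗ[k] A) (g : Fin n → Forest n) :
    fhom α (fmon k (Finsupp.single (graft g) 1))
      = α (tprod k fun i => fhom α (fmon k (g i))) := by
  rw [fmon_single, fhom_X, treeval_graft]
  congr 1
  congr 1
  funext i
  rw [fhom_fmon]

end FHom

section Decomp

variable {n : ℕ}

noncomputable def MS (f : Forest n) : Multiset (PTree n) :=
  ∑ t ∈ f.support, Multiset.replicate (f t) (Quot.out t)

theorem coe_flatMap {β γ : Type*} (h : β → List γ) :
    ∀ L : List β, ((L.flatMap h : List γ) : Multiset γ) = (L.map fun b => ((h b : List γ) : Multiset γ)).sum := by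
  intro L
  induction L with
  | nil => rfl
  | cons b L ih => simp only [List.flatMap_cons, List.map_cons, List.sum_cons, ← ih]; rfl

theorem coe_toList (f : Forest n) : ((Forest.toList f : List (PTree n)) : Multiset (PTree n)) = MS f := by
  rw [Forest.toList, MS, coe_flatMap]
  have h1 : (f.support.toList.map fun t => ((List.replicate (f t) (Quot.out t) : List (PTree n)) : Multiset (PTree n)))
      = f.support.toList.map fun t => Multiset.replicate (f t) (Quot.out t) := by
    refine List.map_congr_left fun t _ => ?_
    exact Multiset.coe_replicate _ _
  rw [h1, Finset.sum_map_toList]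

theorem MS_add (f g : Forest n) : MS (f + g) = MS f + MS g := by
  have hs1 : f.support ⊆ (f + g).support := by
    intro t ht
    rw [Finsupp.mem_support_iff] at ht ⊢
    rw [Finsupp.add_apply]
    omega
  have hs2 : g.support ⊆ (f + g).support := by
    intro t ht
    rw [Finsupp.mem_support_iff] at ht ⊢
    rw [Finsupp.add_apply]
    omega
  calc MS (f + g) = ∑ t ∈ (f + g).support,
        (Multiset.replicate (f t) (Quot.out t) + Multiset.replicate (g t) (Quot.out t)) := by
        refine Finset.sum_congr rfl fun t _ => ?_
        rw [Finsupp.add_apply, Multiset.replicate_add]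
    _ = (∑ t ∈ (f + g).support, Multiset.replicate (f t) (Quot.out t))
        + ∑ t ∈ (f + g).support, Multiset.replicate (g t) (Quot.out t) := Finset.sum_add_distrib
    _ = MS f + MS g := by
        rw [MS, MS]
        congr 1
        · refine (Finset.sum_subset hs1 fun t _ ht => ?_).symm
          rw [Finsupp.notMem_support_iff.mp ht, Multiset.replicate_zero]
        · refine (Finset.sum_subset hs2 fun t _ ht => ?_).symm
          rw [Finsupp.notMem_support_iff.mp ht, Multiset.replicate_zero]

theorem toList_single (t : Tree n) :
    Forest.toList (Finsupp.single t 1 : Forest n) = [Quot.out t] := by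
  rw [Forest.toList, Finsupp.support_single_ne_zero _ one_ne_zero]
  simp

theorem toList_add_perm (f g : Forest n) :
    (Forest.toList (f + g)).Perm (Forest.toList f ++ Forest.toList g) := by
  rw [← Multiset.coe_eq_coe, ← Multiset.coe_add, coe_toList, coe_toList, coe_toList, MS_add]

theorem listForest_nil : listForest ([] : List (PTree n)) = 0 := rfl

theorem listForest_cons (x : PTree n) (xs : List (PTree n)) :
    listForest (x :: xs)
      = (Finsupp.single (Quot.mk PEquiv x) 1 : Forest n) + listForest xs := rfl

theorem toList_listForest_perm : ∀ xs : List (PTree n),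
    (Forest.toList (listForest xs)).Perm (xs.map fun x => Quot.out (Quot.mk PEquiv x)) := by
  intro xs
  induction xs with
  | nil =>
    rw [listForest_nil]
    have h0 : Forest.toList (0 : Forest n) = [] := by
      rw [Forest.toList]
      simp
    rw [h0, List.map_nil]
  | cons x xs ih =>
    rw [listForest_cons, List.map_cons]
    refine (toList_add_perm _ _).trans ?_
    refine (List.Perm.append_right _ (List.Perm.of_eq (toList_single (Quot.mk PEquiv x)))).trans ?_
    rw [List.singleton_append]
    exact ih.cons _

theorem filter_or_perm {β : Type*} (p q : β → Bool) (hdisj : ∀ b, ¬(p b = true ∧ q b = true)) :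
    ∀ m : List β, (m.filter fun b => p b || q b).Perm (m.filter p ++ m.filter q) := by
  intro m
  induction m with
  | nil => rfl
  | cons a m ih =>
    by_cases hp : p a = true <;> by_cases hq : q a = true
    · exact absurd ⟨hp, hq⟩ (hdisj a)
    · simp only [List.filter_cons, hp, hq, Bool.true_or, if_true, cond_true, cond_false]
      simpa using ih.cons a
    · simp only [List.filter_cons, hp, hq, Bool.or_true, Bool.false_or]
      simp only [Bool.not_eq_true] at hp
      simp [hp, hq]
      exact (ih.cons a).trans List.perm_middle.symm
    · simp only [Bool.not_eq_true] at hp hq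
      simp [List.filter_cons, hp, hq]
      exact ih

theorem flatMap_filter_perm {β : Type*} : ∀ (J : List (Fin n)) (m : List (Fin n × β)),
    J.Nodup →
    (J.flatMap fun i => m.filter fun a => a.1 = i).Perm
      (m.filter fun a => decide (a.1 ∈ J)) := by
  intro J
  induction J with
  | nil => intro m _; simp
  | cons j J ih =>
    intro m hnd
    obtain ⟨hj, hnd'⟩ := List.nodup_cons.mp hnd
    rw [List.flatMap_cons]
    refine (List.Perm.append_left (m.filter fun a => a.1 = j) (ih m hnd')).trans ?_
    have heq : (m.filter fun a => decide (a.1 ∈ j :: J))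
        = m.filter fun a => (decide (a.1 = j) || decide (a.1 ∈ J)) := by
      refine List.filter_congr fun a _ => ?_
      simp [List.mem_cons]
    rw [heq]
    refine (filter_or_perm (fun a => decide (a.1 = j)) (fun a => decide (a.1 ∈ J)) ?_ m).symm
    rintro a ⟨h1, h2⟩
    exact hj (of_decide_eq_true h1 ▸ of_decide_eq_true h2)

theorem graft_decomp (l : List (Fin n × PTree n)) :
    graft (fun i => listForest ((l.filter fun a => a.1 = i).map Prod.snd))
      = Quot.mk PEquiv (PTree.node l) := by
  rw [graft]
  have hperm : ((List.finRange n).flatMap fun i =>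
      (Forest.toList (listForest ((l.filter fun a => a.1 = i).map Prod.snd))).map
        fun p => (i, p)).Perm
      (l.map fun a => (a.1, Quot.out (Quot.mk PEquiv a.2))) := by
    have hblock : ∀ i : Fin n,
        ((Forest.toList (listForest ((l.filter fun a : Fin n × PTree n => a.1 = i).map Prod.snd))).map
          fun p => (i, p)).Perm
        ((l.map fun a => (a.1, Quot.out (Quot.mk PEquiv a.2))).filter
          fun a : Fin n × PTree n => a.1 = i) := by
      intro i
      refine ((toList_listForest_perm _).map _).trans ?_
      rw [List.map_map, List.map_map]
      have h1 : ((l.filter fun a => a.1 = i).map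
            (((fun p => (i, p)) ∘ fun x => Quot.out (Quot.mk PEquiv x)) ∘ Prod.snd))
          = (l.filter fun a => a.1 = i).map fun a => (a.1, Quot.out (Quot.mk PEquiv a.2)) := by
        refine List.map_congr_left fun a ha => ?_
        have : a.1 = i := by
          have := List.of_mem_filter ha
          exact of_decide_eq_true this
        simp [Function.comp, this]
      rw [h1, List.filter_map]
      have h2 : ((fun a : Fin n × PTree n => decide (a.1 = i))
          ∘ fun a : Fin n × PTree n => (a.1, Quot.out (Quot.mk PEquiv a.2)))
          = fun a : Fin n × PTree n => decide (a.1 = i) := rfl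
      rw [h2]
    refine (List.Perm.flatMap_left (List.finRange n) fun i _ => hblock i).trans ?_
    refine (flatMap_filter_perm (List.finRange n) _ (List.nodup_finRange n)).trans ?_
    have h3 : ((l.map fun a => (a.1, Quot.out (Quot.mk PEquiv a.2))).filter
        fun a => decide (a.1 ∈ List.finRange n))
        = (l.map fun a => (a.1, Quot.out (Quot.mk PEquiv a.2))) := by
      refine List.filter_eq_self.mpr fun a _ => ?_
      simp [List.mem_finRange]
    rw [h3]
  refine (mk_node_perm hperm).trans ?_
  refine mk_node_congr ?_ ?_
  · rw [List.map_map]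
    rfl
  · rw [List.forall₂_map_left_iff]
    refine List.forall₂_same.mpr fun a _ => ?_
    exact Quot.out_eq _

theorem mem_support_listForest {xs : List (PTree n)} {t : Tree n}
    (h : t ∈ (listForest xs).support) : ∃ x ∈ xs, t = Quot.mk PEquiv x := by
  classical
  induction xs with
  | nil => rw [listForest_nil] at h; simp at h
  | cons x xs ih =>
    rw [listForest_cons] at h
    rcases Finset.mem_union.mp (Finsupp.support_add h) with h1 | h1
    · have := Finsupp.support_single_subset h1
      exact ⟨x, List.mem_cons_self, Finset.mem_singleton.mp this⟩
    · obtain ⟨y, hy, rfl⟩ := ih h1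
      exact ⟨y, List.mem_cons_of_mem _ hy, rfl⟩

end Decomp

theorem algHom_fmon {n : ℕ} {k : Type} [CommRing k] {A : Type} [CommRing A] [Algebra k A]
    (F : SymT k n →ₐ[k] A) (h : Forest n) :
    F (fmon k h) = h.prod fun s m => F (MvPolynomial.X s) ^ m := by
  rw [fmon, MvPolynomial.monomial_eq, _root_.map_mul, MvPolynomial.C_1, _root_.map_one,
    one_mul, map_finsuppProd]
  exact Finsupp.prod_congr fun s _ => by rw [map_pow]

theorem symT_initial_aux {k : Type} [CommRing k] {n : ℕ}
    (A : Type) (hCR : CommRing A) (hAlg : Algebra k A) (α : (⨂[k]^n A) →ₗ[k] A) :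
    ∃! f : SymT k n →ₐ[k] A,
      α ∘ₗ (PiTensorProduct.map fun _ : Fin n => f.toLinearMap)
        = f.toLinearMap ∘ₗ lam := by
  refine ⟨fhom α, ?_, ?_⟩
  · apply tensor_ext
    intro g
    rw [LinearMap.comp_apply, LinearMap.comp_apply, PiTensorProduct.map_tprod, lam_tprod]
    exact (fhom_graft α g).symm
  · intro f' hf'
    have key : ∀ (N : ℕ) (t : Tree n), tsize t ≤ N →
        f' (MvPolynomial.X t) = fhom α (MvPolynomial.X t) := by
      intro N
      induction N with
      | zero =>
        intro t h
        exfalso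
        rw [tsize] at h
        cases hq : Quot.out t with
        | node l => rw [hq, psize_node] at h; omega
      | succ N ih =>
        intro t ht
        obtain ⟨l, hl⟩ : ∃ l, Quot.out t = PTree.node l := by
          cases hq : Quot.out t with
          | node l => exact ⟨l, rfl⟩
        have htmk : t = Quot.mk PEquiv (PTree.node l) := by rw [← hl]; exact (Quot.out_eq t).symm
        set g : Fin n → Forest n :=
          fun i => listForest ((l.filter fun a : Fin n × PTree n => a.1 = i).map Prod.snd)
          with hg
        have hgt : graft g = t := (graft_decomp l).trans htmk.symm
        have hsize : ∀ i : Fin n, ∀ s ∈ (g i).support, tsize s ≤ N := by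
          intro i s hs
          obtain ⟨x, hx, rfl⟩ := mem_support_listForest hs
          obtain ⟨a, ha, rfl⟩ := List.mem_map.mp hx
          have h1 : psize a.2 ≤ psizeL l := psize_le_of_mem (List.mem_of_mem_filter ha)
          have h2 : tsize t = psize (PTree.node l) := by rw [tsize, hl]
          rw [tsize_mk]
          rw [h2, psize_node] at ht
          omega
        have happ := congrArg
          (fun (φ : (⨂[k]^n (SymT k n)) →ₗ[k] A) => φ (tprod k fun i => fmon k (g i))) hf'
        simp only [LinearMap.comp_apply] at happ
        rw [PiTensorProduct.map_tprod, lam_tprod] at happ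
        simp only [AlgHom.toLinearMap_apply] at happ
        -- happ : α (tprod fun i => f' (fmon (g i))) = f' (fmon (single (graft g) 1))
        have hmon : ∀ i : Fin n, f' (fmon k (g i)) = fhom α (fmon k (g i)) := by
          intro i
          rw [algHom_fmon f', algHom_fmon (fhom α)]
          exact Finsupp.prod_congr fun s hs => by rw [ih s (hsize i s hs)]
        rw [hgt, fmon_single] at happ
        rw [← happ]
        simp only [hmon]
        rw [← fhom_graft α g, hgt, fmon_single]
    refine MvPolynomial.algHom_ext fun t => ?_
    exact key (tsize t) t le_rfl


/-- `S(T_n)`, the symmetric algebra on the vector space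
spanned by rooted trees with `n`-coloured edges (realised as the algebra with
basis the `n`-coloured forests), equipped with the grafting operation
`λ : S(T_n)^{⊗n} → S(T_n)` sending an `n`-tuple of forests `(f_1, …, f_n)` to
the tree obtained by adding a new root and connecting the roots of the trees
of `f_i` to it by edges of colour `i`, is an initial object in the category of
commutative `n`-algebras; consequently there is an algebra isomorphism
(compatible with the `n`-ary operations) between the initial commutative
`n`-algebra `C_n` and `S(T_n)`. -/
theorem symT_with_grafting_is_initial (k : Type) [Field k] [CharZero k] (n : ℕ) :
    ∃ lam : (⨂[k]^n (SymT k n)) →ₗ[k] SymT k n,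
      -- `lam` is the grafting operation
      (∀ g : Fin n → Forest n,
        lam (tprod k fun i => fmon k (g i)) = fmon k (Finsupp.single (graft g) 1)) ∧
      -- `(S(T_n), lam)` is initial among commutative `n`-algebras
      (∀ (A : Type) (_ : CommRing A) (_ : Algebra k A) (α : (⨂[k]^n A) →ₗ[k] A),
        ∃! f : SymT k n →ₐ[k] A,
          α ∘ₗ (PiTensorProduct.map fun _ : Fin n => f.toLinearMap)
            = f.toLinearMap ∘ₗ lam) ∧
      -- hence any initial commutative `n`-algebra `(C, lamC)` is isomorphic,
      -- as an algebra (compatibly with the operations), to `S(T_n)`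
      (∀ (C : Type) (_ : CommRing C) (_ : Algebra k C)
        (lamC : (⨂[k]^n C) →ₗ[k] C),
        (∀ (A : Type) (_ : CommRing A) (_ : Algebra k A) (α : (⨂[k]^n A) →ₗ[k] A),
          ∃! f : C →ₐ[k] A,
            α ∘ₗ (PiTensorProduct.map fun _ : Fin n => f.toLinearMap)
              = f.toLinearMap ∘ₗ lamC) →
        ∃ e : C ≃ₐ[k] SymT k n,
          lam ∘ₗ (PiTensorProduct.map fun _ : Fin n => e.toLinearMap)
            = e.toLinearMap ∘ₗ lamC) := by
  refine ⟨lam, lam_tprod, symT_initial_aux, ?_⟩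
  intro C _ _ lamC hC
  obtain ⟨f, hf, hfuniq⟩ := hC (SymT k n) inferInstance inferInstance lam
  obtain ⟨g, hg, hguniq⟩ := symT_initial_aux C inferInstance inferInstance lamC
  have hcomp : ∀ {D E F : Type} (_ : CommRing D) (_ : CommRing E) (_ : CommRing F)
      (_ : Algebra k D) (_ : Algebra k E) (_ : Algebra k F)
      (lamD : (⨂[k]^n D) →ₗ[k] D) (lamE : (⨂[k]^n E) →ₗ[k] E) (lamF : (⨂[k]^n F) →ₗ[k] F)
      (u : D →ₐ[k] E) (v : E →ₐ[k] F),
      (lamE ∘ₗ (PiTensorProduct.map fun _ : Fin n => u.toLinearMap) = u.toLinearMap ∘ₗ lamD) →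
      (lamF ∘ₗ (PiTensorProduct.map fun _ : Fin n => v.toLinearMap) = v.toLinearMap ∘ₗ lamE) →
      lamF ∘ₗ (PiTensorProduct.map fun _ : Fin n => (v.comp u).toLinearMap)
        = (v.comp u).toLinearMap ∘ₗ lamD := by
    intro D E F _ _ _ _ _ _ lamD lamE lamF u v hu hv
    rw [AlgHom.comp_toLinearMap]
    have hmc : (PiTensorProduct.map fun _ : Fin n => v.toLinearMap ∘ₗ u.toLinearMap)
        = (PiTensorProduct.map fun _ : Fin n => v.toLinearMap)
          ∘ₗ (PiTensorProduct.map fun _ : Fin n => u.toLinearMap) := PiTensorProduct.map_comp _ _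
    rw [hmc, ← LinearMap.comp_assoc, hv, LinearMap.comp_assoc, hu, LinearMap.comp_assoc]
  have hid : ∀ {D : Type} (_ : CommRing D) (_ : Algebra k D) (lamD : (⨂[k]^n D) →ₗ[k] D),
      lamD ∘ₗ (PiTensorProduct.map fun _ : Fin n => (AlgHom.id k D).toLinearMap)
        = (AlgHom.id k D).toLinearMap ∘ₗ lamD := by
    intro D _ _ lamD
    rw [AlgHom.toLinearMap_id, PiTensorProduct.map_id]
    rw [LinearMap.comp_id, LinearMap.id_comp]
  have hfg : f.comp g = AlgHom.id k (SymT k n) := by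
    obtain ⟨u, hu, huuniq⟩ := symT_initial_aux (n := n) (SymT k n) inferInstance inferInstance lam
    rw [huuniq (f.comp g) (hcomp _ _ _ _ _ _ lam lamC lam g f hg hf),
      huuniq (AlgHom.id k (SymT k n)) (hid _ _ lam)]
  have hgf : g.comp f = AlgHom.id k C := by
    obtain ⟨v, hv, hvuniq⟩ := hC C inferInstance inferInstance lamC
    rw [hvuniq (g.comp f) (hcomp _ _ _ _ _ _ lamC lam lamC f g hf hg),
      hvuniq (AlgHom.id k C) (hid _ _ lamC)]
  refine ⟨AlgEquiv.ofAlgHom f g hfg hgf, ?_⟩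
  have he : (AlgEquiv.ofAlgHom f g hfg hgf).toLinearMap = f.toLinearMap := rfl
  rw [he]
  exact hf


end CTrees
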